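/- Let ρ > 0 be a real number, v ∈ ℝ³, and let p be a symmetric negative-definite 3×3 real matrix. Define the symmetric 4×4 matrix ĝ by ĝ₀₀ = ρ, ĝ₀ᵢ = ĝᵢ₀ = ρvⁱ, and ĝᵢⱼ = ρvⁱvʲ + pⁱʲ for i,j ∈ {1,2,3}. Then ĝ, viewed as a quadratic form on ℝ⁴, has signature (1,3), i.e., exactly one positive eigenvalue and three negative eigenvalues. -/

import Mathlib

open Matrix

noncomputable def ghat (ρ : ℝ) (v : Fin 3 → ℝ) (p : Matrix (Fin 3) (Fin 3) ℝ) :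
    Matrix (Fin 4) (Fin 4) ℝ :=
  Matrix.of fun μ ν =>
    Fin.cases (Fin.cases ρ (fun j => ρ * v j) ν)
      (fun i => Fin.cases (ρ * v i) (fun j => ρ * v i * v j + p i j) ν) μ

/-! With `ℓ x = x 0 + v ⬝ᵥ Fin.tail x`, the quadratic form of `ĝ` is `ρ (ℓ x)² + x'ᵀ p x'`
(`x' = Fin.tail x`). It is positive at `e₀`, so `ĝ` has a positive eigenvalue, and negative
definite on the hyperplane `ℓ = 0`, of dimension 3. A subspace on which the form is negative
definite meets the span of the eigenvectors with nonnegative eigenvalues only in `0`, so its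
dimension bounds the number of negative eigenvalues. With only four eigenvalues in total, the
signature is `(1, 3)`. -/

open Module Finset

namespace Matrix.IsHermitian

variable {n : Type*} [Fintype n] [DecidableEq n] {A : Matrix n n ℝ} (hA : A.IsHermitian)

theorem dotProduct_mulVec_eq_sum_eigenvalues (x : n → ℝ) :
    x ⬝ᵥ A *ᵥ x =
      ∑ i, hA.eigenvalues i * (star (hA.eigenvectorUnitary : Matrix n n ℝ) *ᵥ x) i ^ 2 := by
  set U : Matrix n n ℝ := (hA.eigenvectorUnitary : Matrix n n ℝ)
  have hUx : x ᵥ* U = star U *ᵥ x := by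
    rw [star_eq_conjTranspose, conjTranspose_eq_transpose_of_trivial, mulVec_transpose]
  conv_lhs => rw [hA.spectral_theorem, Unitary.conjStarAlgAut_apply]
  rw [← mulVec_mulVec, ← mulVec_mulVec, dotProduct_mulVec, hUx]
  simp only [dotProduct, mulVec_diagonal, Function.comp_apply, RCLike.ofReal_real_eq_id, id]
  exact sum_congr rfl fun i _ => by ring

theorem exists_eigenvalues_pos_of_dotProduct_mulVec_pos {x : n → ℝ} (hx : 0 < x ⬝ᵥ A *ᵥ x) :
    ∃ i, 0 < hA.eigenvalues i := by
  by_contra! hle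
  rw [hA.dotProduct_mulVec_eq_sum_eigenvalues] at hx
  exact hx.not_ge <| sum_nonpos fun i _ => mul_nonpos_of_nonpos_of_nonneg (hle i) (sq_nonneg _)

theorem dotProduct_mulVec_nonneg_of_star_eigenvectorUnitary_mulVec_eq_zero {x : n → ℝ}
    (hx : ∀ i, hA.eigenvalues i < 0 → (star (hA.eigenvectorUnitary : Matrix n n ℝ) *ᵥ x) i = 0) :
    0 ≤ x ⬝ᵥ A *ᵥ x := by
  rw [hA.dotProduct_mulVec_eq_sum_eigenvalues]
  refine sum_nonneg fun i _ => ?_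
  rcases lt_or_ge (hA.eigenvalues i) 0 with hi | hi
  · simp [hx i hi]
  · positivity

theorem finrank_le_card_eigenvalues_neg (W : Submodule ℝ (n → ℝ))
    (hW : ∀ x ∈ W, x ≠ 0 → x ⬝ᵥ A *ᵥ x < 0) :
    finrank ℝ W ≤ #{i | hA.eigenvalues i < 0} := by
  set N : Finset n := {i | hA.eigenvalues i < 0}
  let F : (n → ℝ) →ₗ[ℝ] (N → ℝ) :=
    LinearMap.funLeft ℝ ℝ Subtype.val ∘ₗ (star (hA.eigenvectorUnitary : Matrix n n ℝ)).mulVecLin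
  have hrange : finrank ℝ (LinearMap.range F) ≤ #N := by
    simpa using Submodule.finrank_le (LinearMap.range F)
  have hnullity := LinearMap.finrank_range_add_finrank_ker F
  have hdisj : Disjoint W (LinearMap.ker F) := by
    refine Submodule.disjoint_def.2 fun x hxW hxF => ?_
    by_contra hx0
    refine (hW x hxW hx0).not_ge <|
      hA.dotProduct_mulVec_nonneg_of_star_eigenvectorUnitary_mulVec_eq_zero fun i hi => ?_
    simpa [F] using congrFun (LinearMap.mem_ker.1 hxF) ⟨i, by simpa [N] using hi⟩
  have hdim := Submodule.finrank_add_finrank_le_of_disjoint hdisj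
  simp only [finrank_pi, Fintype.card] at hnullity hdim
  omega

end Matrix.IsHermitian

theorem ghat_cons_dotProduct_mulVec_cons (ρ : ℝ) (v : Fin 3 → ℝ) (p : Matrix (Fin 3) (Fin 3) ℝ)
    (a : ℝ) (y : Fin 3 → ℝ) :
    (Fin.cons a y : Fin 4 → ℝ) ⬝ᵥ ghat ρ v p *ᵥ Fin.cons a y =
      ρ * (a + v ⬝ᵥ y) ^ 2 + y ⬝ᵥ p *ᵥ y := by
  simp only [ghat, dotProduct, mulVec, of_apply, Fin.sum_univ_succ, Fin.cases_zero, Fin.cons_zero,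
    Fin.cases_succ, Fin.cons_succ, Fin.succ_zero_eq_one, Fin.succ_one_eq_two, univ_unique,
    Fin.default_eq_zero, sum_singleton]
  ring

def consNegDotProduct {m : ℕ} (v : Fin m → ℝ) : (Fin m → ℝ) →ₗ[ℝ] (Fin (m + 1) → ℝ) :=
  (-dotProductBilin ℝ ℝ v).vecCons LinearMap.id

theorem consNegDotProduct_apply {m : ℕ} (v y : Fin m → ℝ) :
    consNegDotProduct v y = Fin.cons (-(v ⬝ᵥ y)) y :=
  rfl

theorem finrank_range_consNegDotProduct {m : ℕ} (v : Fin m → ℝ) :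
    finrank ℝ (LinearMap.range (consNegDotProduct v)) = m := by
  rw [LinearMap.finrank_range_of_inj fun y z hyz => by
    simpa [consNegDotProduct_apply] using congrArg Fin.tail hyz]
  simp

theorem ghat_dotProduct_mulVec_neg_of_mem_range (ρ : ℝ) (v : Fin 3 → ℝ)
    {p : Matrix (Fin 3) (Fin 3) ℝ} (hneg : (-p).PosDef) :
    ∀ x ∈ LinearMap.range (consNegDotProduct v), x ≠ 0 → x ⬝ᵥ ghat ρ v p *ᵥ x < 0 := by
  rintro _ ⟨y, rfl⟩ hx
  have hy : y ≠ 0 := by rintro rfl; exact hx (map_zero _)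
  rw [consNegDotProduct_apply, ghat_cons_dotProduct_mulVec_cons, neg_add_cancel]
  simpa [neg_mulVec] using hneg.dotProduct_mulVec_pos hy

theorem ghat_signature_general (ρ : ℝ) (hρ : 0 < ρ) (v : Fin 3 → ℝ)
    (p : Matrix (Fin 3) (Fin 3) ℝ) (hneg : (-p).PosDef)
    (h : (ghat ρ v p).IsHermitian) :
    (Finset.univ.filter fun i => 0 < h.eigenvalues i).card = 1 ∧
    (Finset.univ.filter fun i => h.eigenvalues i < 0).card = 3 := by
  have hpos : 1 ≤ #{i | 0 < h.eigenvalues i} := by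
    obtain ⟨i, hi⟩ := h.exists_eigenvalues_pos_of_dotProduct_mulVec_pos (x := Fin.cons 1 0)
      (by simpa [ghat_cons_dotProduct_mulVec_cons] using hρ)
    exact card_pos.2 ⟨i, by simpa using hi⟩
  have hneg3 : 3 ≤ #{i | h.eigenvalues i < 0} :=
    (finrank_range_consNegDotProduct v).ge.trans <|
      h.finrank_le_card_eigenvalues_neg _ (ghat_dotProduct_mulVec_neg_of_mem_range ρ v hneg)
  have htotal : #{i | 0 < h.eigenvalues i} + #{i | h.eigenvalues i < 0} ≤ 4 := by
    rw [← card_union_of_disjoint (disjoint_filter.2 fun i _ hi => hi.not_gt)]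
    exact card_le_univ _
  constructor <;> omega

/-- the densitized metric built from `ρ > 0`, `v`, and a symmetric
negative-definite pressure tensor `p` has signature (1,3): exactly one positive
and three negative eigenvalues. -/
theorem ghat_signature (ρ : ℝ) (hρ : 0 < ρ) (v : Fin 3 → ℝ)
    (p : Matrix (Fin 3) (Fin 3) ℝ) (hp : p.IsSymm) (hneg : (-p).PosDef)
    (h : (ghat ρ v p).IsHermitian) :
    (Finset.univ.filter fun i => 0 < h.eigenvalues i).card = 1 ∧
    (Finset.univ.filter fun i => h.eigenvalues i < 0).card = 3 :=
  ghat_signature_general ρ hρ v p hneg h
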